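/- arXiv:1507.07968 — 3 statements merged into one kernel-verified Lean document; each statement's English description precedes it below -/
import Mathlib

section
/- For integers m ≥ 1, n ≥ 0, and k ≥ 0, the horizontal recurrence holds: k · C(n,k;m) = sum over i from 1 to m of ((n+1)·i - k) · C(n, k-i; m), with C(n,j;m) = 0 for j < 0. -/
/-!
Write `P = 1 + t + ⋯ + t^m` and `θ = t · d/dt`. Then `θ (P^(n+1)) = (n+1) P^n θ P`. Expanding
`P^(n+1) = ∑ᵢ P^n tⁱ` and `θ P = ∑ᵢ i tⁱ` and comparing coefficients of `t^k` gives
`k ∑_{i=0}^m C(n,k-i) = (n+1) ∑_{i=0}^m i C(n,k-i)`; separating the term `i = 0` on the left is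
the recurrence.
-/

open Polynomial Finset

/-- Polynomial (extended binomial) coefficient: the coefficient of `t^k` in
`(1 + t + ⋯ + t^m)^n`, defined to be `0` for negative `k`. -/
noncomputable def pc (m n : ℕ) (k : ℤ) : ℤ :=
  if 0 ≤ k then
    ((∑ i ∈ Finset.range (m + 1), (Polynomial.X : Polynomial ℤ) ^ i) ^ n).coeff k.toNat
  else 0

namespace Polynomial

variable {R : Type*}

theorem coeff_X_mul_derivative [Semiring R] (f : R[X]) (k : ℕ) :
    (X * derivative f).coeff k = k * f.coeff k := by
  cases k with
  | zero => simp
  | succ j =>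
    rw [coeff_X_mul, coeff_derivative, ← Nat.cast_succ, (Nat.cast_commute _ _).eq]

theorem X_mul_derivative_X_pow [Semiring R] (i : ℕ) :
    X * derivative (X ^ i : R[X]) = C (i : R) * X ^ i := by
  cases i with
  | zero => simp
  | succ j => rw [derivative_X_pow, ← mul_assoc, X_mul_C, mul_assoc, ← pow_succ']; rfl

theorem X_mul_derivative_sum_X_pow [Semiring R] (s : Finset ℕ) :
    X * derivative (∑ i ∈ s, X ^ i : R[X]) = ∑ i ∈ s, C (i : R) * X ^ i := by
  simp only [derivative_sum, mul_sum, X_mul_derivative_X_pow]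

theorem X_mul_derivative_pow_succ [CommSemiring R] (p : R[X]) (n : ℕ) :
    X * derivative (p ^ (n + 1)) = C (n + 1 : R) * (p ^ n * (X * derivative p)) := by
  rw [derivative_pow_succ]; ring

end Polynomial

theorem pc_natCast_sub (m n k i : ℕ) :
    pc m n ((k : ℤ) - i) = ((∑ j ∈ range (m + 1), (X : ℤ[X]) ^ j) ^ n * X ^ i).coeff k := by
  rw [pc, coeff_mul_X_pow']
  by_cases hik : i ≤ k
  · rw [if_pos (by omega), if_pos hik]
    congr
    omega
  · rw [if_neg (by omega), if_neg hik]

theorem pc_euler (m n k : ℕ) :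
    (k : ℤ) * ∑ i ∈ range (m + 1), pc m n (k - i)
      = (n + 1) * ∑ i ∈ range (m + 1), i * pc m n (k - i) := by
  set P : ℤ[X] := ∑ i ∈ range (m + 1), X ^ i
  have hpow : P ^ (n + 1) = ∑ i ∈ range (m + 1), P ^ n * X ^ i := by rw [pow_succ, mul_sum]
  have hθ : X * derivative (P ^ (n + 1))
      = C (n + 1 : ℤ) * ∑ i ∈ range (m + 1), C (i : ℤ) * (P ^ n * X ^ i) := by
    rw [X_mul_derivative_pow_succ, X_mul_derivative_sum_X_pow, mul_sum]
    simp only [mul_left_comm (P ^ n)]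
  have h := congrArg (coeff · k) hθ
  simp only [coeff_X_mul_derivative, coeff_C_mul, hpow, finsetSum_coeff] at h
  simpa only [pc_natCast_sub, mul_sum] using h

theorem pc_horizontal_general (m n k : ℕ) :
    (k : ℤ) * pc m n k = ∑ i ∈ Finset.Icc 1 m, (((n : ℤ) + 1) * i - k) * pc m n ((k : ℤ) - i) := by
  have euler := pc_euler m n k
  rw [Nat.range_succ_eq_Icc_zero, ← add_sum_Ioc_eq_sum_Icc (Nat.zero_le m),
    ← add_sum_Ioc_eq_sum_Icc (Nat.zero_le m), ← Icc_add_one_left_eq_Ioc] at euler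
  simp only [sub_mul, sum_sub_distrib, mul_assoc, ← mul_sum]
  push_cast [sub_zero] at euler
  linear_combination euler

theorem pc_horizontal (m n k : ℕ) (hm : 1 ≤ m) :
    (k : ℤ) * pc m n k = ∑ i ∈ Finset.Icc 1 m, (((n : ℤ) + 1) * i - k) * pc m n ((k : ℤ) - i) :=
  pc_horizontal_general m n k
end

section
/- For integers m ≥ 1 and n ≥ 0, the sum of squares of polynomial coefficients along row n equals the central coefficient of row 2n: sum over k from 0 to mn of C(n,k;m)^2 = C(2n, mn; m). -/
open Polynomial Finset

namespace PcAux

noncomputable def p (m : ℕ) : Polynomial ℤ := ∑ i ∈ Finset.range (m + 1), Polynomial.X ^ i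

lemma coeff_p (m j : ℕ) : (p m).coeff j = if j ≤ m then 1 else 0 := by
  simp only [p, finset_sum_coeff, coeff_X_pow]
  rw [Finset.sum_ite_eq (Finset.range (m + 1)) j (fun _ => (1 : ℤ))]
  simp [Nat.lt_succ_iff]

lemma natDegree_p (m : ℕ) : (p m).natDegree = m := by
  apply le_antisymm
  · apply Polynomial.natDegree_sum_le_of_forall_le
    intro i hi
    simpa using Nat.lt_succ_iff.mp (Finset.mem_range.mp hi)
  · apply Polynomial.le_natDegree_of_ne_zero
    simp [coeff_p]

lemma reverse_p (m : ℕ) : (p m).reverse = p m := by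
  ext j
  rw [coeff_reverse, natDegree_p]
  rcases le_or_gt j m with h | h
  · rw [revAt_le h, coeff_p, coeff_p, if_pos h, if_pos (Nat.sub_le m j)]
  · rw [revAt_eq_self_of_lt h]

lemma reverse_pow_p (m n : ℕ) : ((p m) ^ n).reverse = (p m) ^ n := by
  induction n with
  | zero => simp [Polynomial.reverse]
  | succ k ih =>
    rw [pow_succ, reverse_mul_of_domain, ih, reverse_p]

lemma natDegree_pow_p (m n : ℕ) : ((p m) ^ n).natDegree = n * m := by
  rw [Polynomial.natDegree_pow, natDegree_p]

lemma coeff_symm (m n k : ℕ) (hk : k ≤ m * n) :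
    ((p m) ^ n).coeff (m * n - k) = ((p m) ^ n).coeff k := by
  rw [Nat.mul_comm m n] at hk ⊢
  conv_rhs => rw [← reverse_pow_p m n]
  rw [coeff_reverse, natDegree_pow_p, revAt_le hk]

end PcAux

theorem pc_sum_squares (m n : ℕ) (hm : 1 ≤ m) :
    ∑ k ∈ Finset.range (m * n + 1), (pc m n k) ^ 2 = pc m (2 * n) (m * n) := by
  have key : ((PcAux.p m) ^ (2 * n)).coeff (m * n)
      = ∑ k ∈ Finset.range (m * n + 1),
        ((PcAux.p m) ^ n).coeff k * ((PcAux.p m) ^ n).coeff (m * n - k) := by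
    rw [two_mul, pow_add, Polynomial.coeff_mul,
      Finset.Nat.sum_antidiagonal_eq_sum_range_succ (fun a b => ((PcAux.p m) ^ n).coeff a * ((PcAux.p m) ^ n).coeff b)]
  have hpc : ∀ N (k : ℕ), pc m N (k : ℤ) = ((PcAux.p m) ^ N).coeff k := by
    intro N k
    simp [pc, PcAux.p]
  rw [show ((m : ℤ) * n) = ((m * n : ℕ) : ℤ) by push_cast; ring, hpc, key]
  apply Finset.sum_congr rfl
  intro k hk
  rw [hpc, PcAux.coeff_symm m n k (by simpa [Nat.lt_succ_iff] using Finset.mem_range.mp hk), sq]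
end

section
/- For even integers m ≥ 2 and any n ≥ 0: sum over k from 0 to mn of (-1)^k · C(n,k;m)^2 = C(n, mn/2; m). -/
/-! For even `m` the identity `p_m(-t) p_m(t) = p_m(t²)` follows from
`(t - 1) p_m(t) = t^(m+1) - 1` and `(-t - 1) p_m(-t) = -t^(m+1) - 1`. Raising it to the
`n`-th power and comparing coefficients of `t^(mn)` gives `∑ (-1)^k C(n,k) C(n,mn-k)` on the
left, which is the alternating sum of squares because `p_m^n` is palindromic of degree `mn`,
and `C(n, mn/2)` on the right. -/

open Polynomial Finset

namespace Polynomial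

variable {R : Type*}

theorem coeff_comp_neg_X [Ring R] (p : R[X]) (k : ℕ) :
    (p.comp (-X)).coeff k = (-1) ^ k * p.coeff k := by
  induction p using Polynomial.induction_on' with
  | add p q hp hq => simp [add_comp, hp, hq, mul_add]
  | monomial n a =>
    have hX : (-X : R[X]) ^ n = C ((-1) ^ n) * X ^ n := by
      rw [neg_pow, C_pow, C_neg, C_1]
    rw [← C_mul_X_pow_eq_monomial, C_mul_comp, X_pow_comp, hX, ← mul_assoc, ← C_mul,
      coeff_C_mul_X_pow, coeff_C_mul_X_pow]
    split_ifs with h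
    · subst h; exact ((Commute.neg_one_left a).pow_left k).symm.eq
    · simp

theorem reflect_pow_of_reflect_eq [Semiring R] {p : R[X]} {d : ℕ} (hdeg : p.natDegree ≤ d)
    (hp : p.reflect d = p) (n : ℕ) : (p ^ n).reflect (d * n) = p ^ n := by
  induction n with
  | zero => simp
  | succ n ih =>
    have hdeg_pow : (p ^ n).natDegree ≤ d * n := mul_comm n d ▸ natDegree_pow_le_of_le n hdeg
    rw [pow_succ, mul_add_one, reflect_mul _ _ hdeg_pow hdeg, ih, hp]

end Polynomial

noncomputable def onesPoly (R : Type*) [Semiring R] (m : ℕ) : R[X] :=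
  ∑ i ∈ range (m + 1), X ^ i

section onesPoly

variable {R : Type*}

theorem coeff_onesPoly [Semiring R] (m i : ℕ) :
    (onesPoly R m).coeff i = if i ≤ m then 1 else 0 := by
  simp [onesPoly, coeff_X_pow]

theorem natDegree_onesPoly_le [Semiring R] (m : ℕ) : (onesPoly R m).natDegree ≤ m :=
  natDegree_sum_le_of_forall_le _ _ fun i hi =>
    (natDegree_X_pow_le i).trans (mem_range_succ_iff.mp hi)

theorem reflect_onesPoly [Semiring R] (m : ℕ) : (onesPoly R m).reflect m = onesPoly R m := by
  ext i
  rw [coeff_reflect]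
  rcases le_or_gt i m with h | h
  · rw [revAt_le h, coeff_onesPoly, coeff_onesPoly, if_pos (Nat.sub_le m i), if_pos h]
  · rw [revAt_eq_self_of_lt h]

theorem onesPoly_comp_neg_X_mul_self [CommRing R] {m : ℕ} (hm : Even m) :
    (onesPoly R m).comp (-X) * onesPoly R m = expand R 2 (onesPoly R m) := by
  have h_pos : onesPoly R m * (X - 1) = X ^ (m + 1) - 1 := geom_sum_mul X (m + 1)
  have h_neg : (onesPoly R m).comp (-X) * (-X - 1) = -X ^ (m + 1) - 1 := by
    simpa [onesPoly, Polynomial.sum_comp, hm.add_one.neg_pow] using geom_sum_mul (-X : R[X]) (m + 1)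
  have h_sq : expand R 2 (onesPoly R m) * (X ^ 2 - 1) = (X ^ 2) ^ (m + 1) - 1 := by
    simpa [onesPoly, map_sum] using geom_sum_mul (X ^ 2 : R[X]) (m + 1)
  apply (monic_X_pow_sub_C (1 : R) two_ne_zero).isRegular.right
  simp only [C_1]
  calc (onesPoly R m).comp (-X) * onesPoly R m * (X ^ 2 - 1)
      = -((onesPoly R m).comp (-X) * (-X - 1)) * (onesPoly R m * (X - 1)) := by ring
    _ = (X ^ 2) ^ (m + 1) - 1 := by rw [h_neg, h_pos]; ring
    _ = expand R 2 (onesPoly R m) * (X ^ 2 - 1) := h_sq.symm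

end onesPoly

theorem sum_range_neg_one_pow_mul_coeff_sq {R : Type*} [CommRing R] {p : R[X]} {d : ℕ}
    (hp : p.reflect d = p) :
    ∑ k ∈ range (d + 1), (-1) ^ k * p.coeff k ^ 2 = (p.comp (-X) * p).coeff d := by
  rw [coeff_mul, Nat.sum_antidiagonal_eq_sum_range_succ_mk]
  refine sum_congr rfl fun k hk => ?_
  have h_symm : p.coeff (d - k) = p.coeff k := by
    conv_rhs => rw [← hp, coeff_reflect, revAt_le (mem_range_succ_iff.mp hk)]
  rw [coeff_comp_neg_X, h_symm]
  ring

theorem pc_natCast (m n k : ℕ) : pc m n k = (onesPoly ℤ m ^ n).coeff k := by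
  simp [pc, onesPoly]

theorem pc_alt_squares_even_general (m n : ℕ) (hme : Even m) :
    ∑ k ∈ Finset.range (m * n + 1), (-1 : ℤ) ^ k * (pc m n k) ^ 2 =
      pc m n ((m * n / 2 : ℕ) : ℤ) := by
  have h_palindromic : (onesPoly ℤ m ^ n).reflect (m * n) = onesPoly ℤ m ^ n :=
    reflect_pow_of_reflect_eq (natDegree_onesPoly_le m) (reflect_onesPoly m) n
  have h_square :
      (onesPoly ℤ m ^ n).comp (-X) * onesPoly ℤ m ^ n = expand ℤ 2 (onesPoly ℤ m ^ n) := by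
    rw [pow_comp, ← mul_pow, onesPoly_comp_neg_X_mul_self hme, map_pow]
  have h_even : 2 * (m * n / 2) = m * n := Nat.mul_div_cancel' (hme.mul_right n).two_dvd
  simp only [pc_natCast]
  rw [sum_range_neg_one_pow_mul_coeff_sq h_palindromic, h_square, ← h_even,
    coeff_expand_mul' two_pos, h_even]

theorem pc_alt_squares_even (m n : ℕ) (hm : 2 ≤ m) (hme : Even m) :
    ∑ k ∈ Finset.range (m * n + 1), (-1 : ℤ) ^ k * (pc m n k) ^ 2 =
      pc m n ((m * n / 2 : ℕ) : ℤ) :=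
  pc_alt_squares_even_general m n hme
end
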